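/- Let D be a countable direct sum of chains with infinitely many non-trivial components such that there is a uniform finite bound on the sizes of all components of D. Then D has exactly ℵ₀ siblings up to isomorphism. -/

import Mathlib

open Cardinal

/-- Two preorders are equimorphic (siblings) if each order-embeds into the other. -/
def Equimorphic (α : Type*) (β : Type*) [Preorder α] [Preorder β] : Prop :=
  Nonempty (α ↪o β) ∧ Nonempty (β ↪o α)

/-- The setoid identifying order-isomorphic equimorphic substructures. -/
def sibSetoid (α : Type*) [Preorder α] : Setoid {S : Set α // Equimorphic S α} :=
  ⟨fun S T => Nonempty ((S : Set α) ≃o (T : Set α)),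
    ⟨fun _ => ⟨OrderIso.refl _⟩, fun ⟨e⟩ => ⟨e.symm⟩, fun ⟨e⟩ ⟨f⟩ => ⟨e.trans f⟩⟩⟩

/-- The sibling number of a structure: the number of isomorphism classes of
substructures equimorphic to it (every sibling is isomorphic to such a substructure). -/
noncomputable def sibNumber (α : Type*) [Preorder α] : Cardinal :=
  #(Quotient (sibSetoid α))

/-!
Every subset of a sum of chains is itself a sum of chains, namely of its fibres. When the
components are finite of size `< M`, such a sum is determined up to isomorphism by the number
of components of each size `n < M`; each of these numbers is at most `ℵ₀`, so there are at most
`ℵ₀` siblings. Conversely, by pigeonhole infinitely many components `b 0, b 1, …` share a size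
`k ≥ 2`. Deleting the trivial components and shrinking `b 0, …, b (m - 1)` to points leaves a
subset with exactly `m` isolated points, and it is still equimorphic to the whole sum: the
trivial components and the copies `b n` are sent injectively into the untouched copies
`b (m + _)`. Isolated points are preserved by isomorphisms, so these subsets are pairwise
non-isomorphic.
-/

universe u

open Function Set

namespace Sigma

variable {ι κ : Type*} {α : ι → Type*} {β : κ → Type*}

theorem fst_eq_of_le [∀ i, LE (α i)] {x y : Σ i, α i} (h : x ≤ y) : x.1 = y.1 :=
  (le_def.1 h).1

theorem le_or_le_of_fst_eq [∀ i, LinearOrder (α i)] {x y : Σ i, α i} (h : x.1 = y.1) :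
    x ≤ y ∨ y ≤ x := by
  obtain ⟨i, a⟩ := x
  obtain ⟨j, b⟩ := y
  obtain rfl : i = j := h
  exact (le_total a b).imp mk_le_mk_iff.2 mk_le_mk_iff.2

theorem map_le_map_iff [∀ i, LE (α i)] [∀ j, LE (β j)] {θ : ι → κ} (hθ : Injective θ)
    {f : ∀ i, α i → β (θ i)} (hf : ∀ i a b, f i a ≤ f i b ↔ a ≤ b) {x y : Σ i, α i} :
    Sigma.map θ f x ≤ Sigma.map θ f y ↔ x ≤ y := by
  obtain ⟨i, a⟩ := x
  obtain ⟨j, b⟩ := y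
  constructor
  · intro h
    obtain rfl : i = j := hθ (fst_eq_of_le h)
    exact mk_le_mk_iff.2 ((hf i a b).1 (mk_le_mk_iff.1 h))
  · intro h
    obtain rfl : i = j := fst_eq_of_le h
    exact mk_le_mk_iff.2 ((hf i a b).2 (mk_le_mk_iff.1 h))

end Sigma

section SigmaOrderHom

variable {ι κ : Type*} {α : ι → Type*} {β : κ → Type*} [∀ i, PartialOrder (α i)]
  [∀ j, Preorder (β j)]

def OrderEmbedding.sigmaMap {θ : ι → κ} (hθ : Injective θ) (f : ∀ i, α i ↪o β (θ i)) :
    (Σ i, α i) ↪o Σ j, β j :=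
  OrderEmbedding.ofMapLEIff (Sigma.map θ fun i => f i) fun _ _ =>
    Sigma.map_le_map_iff hθ fun i _ _ => (f i).le_iff_le

def OrderIso.sigmaCongr (e : ι ≃ κ) (f : ∀ i, α i ≃o β (e i)) : (Σ i, α i) ≃o Σ j, β j :=
  ⟨Equiv.sigmaCongr e fun i => (f i).toEquiv,
    Sigma.map_le_map_iff e.injective fun i _ _ => (f i).le_iff_le⟩

def OrderIso.sigmaPreimage (S : Set (Σ i, α i)) : (Σ i, Sigma.mk i ⁻¹' S) ≃o S where
  toFun x := ⟨⟨x.1, x.2.1⟩, x.2.2⟩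
  invFun x := ⟨x.1.1, x.1.2, x.2⟩
  left_inv _ := rfl
  right_inv _ := rfl
  map_rel_iff' {x y} :=
    Sigma.map_le_map_iff (θ := id) (f := fun _ => Subtype.val) (x := x) (y := y) injective_id
      fun _ _ _ => Iff.rfl

def OrderEmbedding.ofSubsingleton {γ δ : Type*} [Preorder γ] [Preorder δ] [Subsingleton γ]
    (d : δ) : γ ↪o δ where
  toFun _ := d
  inj' x y _ := Subsingleton.elim x y
  map_rel_iff' {x y} := ⟨fun _ => (Subsingleton.elim x y).le, fun _ => le_rfl⟩

end SigmaOrderHom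

theorem Finite.nonempty_orderIso_of_natCard_eq {γ δ : Type*} [LinearOrder γ] [LinearOrder δ]
    [Finite γ] [Finite δ] (h : Nat.card γ = Nat.card δ) : Nonempty (γ ≃o δ) := by
  have := Fintype.ofFinite γ
  have := Fintype.ofFinite δ
  rw [Nat.card_eq_fintype_card, Nat.card_eq_fintype_card] at h
  exact ⟨(Fintype.orderIsoFinOfCardEq γ h).symm.trans (Fintype.orderIsoFinOfCardEq δ rfl)⟩

def IsIsolated {α : Type*} [LE α] (x : α) : Prop :=
  ∀ y, x ≤ y ∨ y ≤ x → y = x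

theorem IsIsolated.map {α β : Type*} [Preorder α] [Preorder β] {x : α} (h : IsIsolated x)
    (e : α ≃o β) : IsIsolated (e x) := by
  intro y hy
  rw [← e.apply_symm_apply y, e.le_iff_le, e.le_iff_le] at hy
  rw [← e.apply_symm_apply y, h _ hy]

theorem OrderIso.natCard_isIsolated_eq {α β : Type*} [Preorder α] [Preorder β] (e : α ≃o β) :
    Nat.card {x : α // IsIsolated x} = Nat.card {y : β // IsIsolated y} :=
  Nat.card_congr <| e.toEquiv.subtypeEquiv fun x =>
    ⟨fun h => h.map e, fun h => by simpa using h.map e.symm⟩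

theorem Sigma.isIsolated_subtype_iff {ι : Type*} {α : ι → Type*} [∀ i, LinearOrder (α i)]
    {S : Set (Σ i, α i)} {x : S} :
    IsIsolated x ↔ ∀ y : S, (y : Σ i, α i).1 = (x : Σ i, α i).1 → y = x :=
  ⟨fun h y hy => h y (Sigma.le_or_le_of_fst_eq hy.symm),
    fun h y hy => h y (hy.elim (fun h => (Sigma.fst_eq_of_le h).symm) Sigma.fst_eq_of_le)⟩

theorem Sigma.nonempty_orderIso_of_card_eq {ι κ : Type u} {α : ι → Type*} {β : κ → Type*}
    [∀ i, LinearOrder (α i)] [∀ j, LinearOrder (β j)] [∀ i, Finite (α i)] [∀ j, Finite (β j)]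
    (h : ∀ n, #{i // Nat.card (α i) = n} = #{j // Nat.card (β j) = n}) :
    Nonempty ((Σ i, α i) ≃o Σ j, β j) := by
  let e n : {i // Nat.card (α i) = n} ≃ {j // Nat.card (β j) = n} := (Cardinal.eq.1 (h n)).some
  let E : ι ≃ κ := (Equiv.sigmaFiberEquiv fun i => Nat.card (α i)).symm.trans <|
    (Equiv.sigmaCongrRight e).trans (Equiv.sigmaFiberEquiv fun j => Nat.card (β j))
  have hE : ∀ i, Nat.card (α i) = Nat.card (β (E i)) := fun i => (e _ ⟨i, rfl⟩).2.symm
  exact ⟨OrderIso.sigmaCongr E fun i => (Finite.nonempty_orderIso_of_natCard_eq (hE i)).some⟩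

theorem sibNumber_sigma_le_aleph0 {I : Type u} [Countable I] {C : I → Type*}
    [∀ i, LinearOrder (C i)] [∀ i, Finite (C i)] {M : ℕ} (hM : ∀ i, Nat.card (C i) < M) :
    sibNumber (Σ i, C i) ≤ ℵ₀ := by
  -- The count of empty fibres (`n = 0`) is not an isomorphism invariant, so we only show that
  -- the profile of a representative determines its class.
  let profile (S : Set (Σ i, C i)) (n : Fin M) : ℕ∞ :=
    toENat #{i // Nat.card (Sigma.mk i ⁻¹' S) = n}
  have hempty (S : Set (Σ i, C i)) {n : ℕ} (hn : ¬n < M) :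
      IsEmpty {i // Nat.card (Sigma.mk i ⁻¹' S) = n} :=
    ⟨fun i => hn (i.2 ▸ (Finite.card_subtype_le _).trans_lt (hM i))⟩
  have hinj : Injective fun q : Quotient (sibSetoid (Σ i, C i)) => profile q.out.1 := by
    intro q q' hq
    have hcard (n : ℕ) : #{i // Nat.card (Sigma.mk i ⁻¹' q.out.1) = n} =
        #{i // Nat.card (Sigma.mk i ⁻¹' q'.out.1) = n} := by
      by_cases hn : n < M
      · exact toENat_injOn mk_le_aleph0 mk_le_aleph0 (congrFun hq ⟨n, hn⟩)
      · have := hempty q.out.1 hn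
        have := hempty q'.out.1 hn
        simp only [mk_eq_zero]
    obtain ⟨e⟩ := Sigma.nonempty_orderIso_of_card_eq hcard
    exact Quotient.out_equiv_out.1
      ⟨(OrderIso.sigmaPreimage _).symm.trans (e.trans (OrderIso.sigmaPreimage _))⟩
  have := hinj.countable
  exact mk_le_aleph0

section Collapse

variable {I : Type*} {C : I → Type*} [∀ i, LinearOrder (C i)] {b : ℕ → I}

def collapse (b : ℕ → I) (pt : ∀ n, C (b n)) (m : ℕ) : Set (Σ i, C i) :=
  {x | Nontrivial (C x.1) ∧ x.1 ∉ b '' Iio m} ∪ (fun n => ⟨b n, pt n⟩) '' Iio m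

theorem isIsolated_collapse_iff (hb : Injective b) {pt : ∀ n, C (b n)} {m : ℕ}
    {x : collapse b pt m} : IsIsolated x ↔ ∃ n < m, (⟨b n, pt n⟩ : Σ i, C i) = x := by
  rw [Sigma.isIsolated_subtype_iff]
  obtain ⟨⟨i, a⟩, hx⟩ := x
  constructor
  · rcases hx with ⟨hnt, hi⟩ | hx
    · intro h
      obtain ⟨c, hc⟩ := exists_ne a
      have := h ⟨⟨i, c⟩, Or.inl ⟨hnt, hi⟩⟩ rfl
      exact absurd (eq_of_heq (Sigma.mk.inj_iff.1 (congrArg Subtype.val this)).2) hc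
    · exact fun _ => hx
  · rintro ⟨n, hn, ⟨⟩⟩ ⟨y, hy⟩ (h : y.1 = b n)
    rcases hy with ⟨-, hy⟩ | ⟨n', -, rfl⟩
    · exact absurd ⟨n, hn, h.symm⟩ hy
    · obtain rfl : n' = n := hb h
      rfl

theorem natCard_isIsolated_collapse (hb : Injective b) (pt : ∀ n, C (b n)) (m : ℕ) :
    Nat.card {x : collapse b pt m // IsIsolated x} = m := by
  let point (n : Iio m) : {x : collapse b pt m // IsIsolated x} :=
    ⟨⟨⟨b n, pt n⟩, Or.inr ⟨n, n.2, rfl⟩⟩, (isIsolated_collapse_iff hb).2 ⟨n, n.2, rfl⟩⟩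
  have hpoint : Bijective point := by
    refine ⟨fun n n' h => Subtype.ext (hb (congrArg (fun x => x.1.1.1) h)), ?_⟩
    rintro ⟨x, hx⟩
    obtain ⟨n, hn, hnx⟩ := (isIsolated_collapse_iff hb).1 hx
    exact ⟨⟨n, hn⟩, Subtype.ext (Subtype.ext hnx)⟩
  rw [← Nat.card_congr (Equiv.ofBijective point hpoint), Nat.card_eq_fintype_card]
  simp

variable {K : Type*} [LinearOrder K] [Nontrivial K]

theorem exists_injective_reindex [Countable I] (hb : Injective b) (e : ∀ n, C (b n) ≃o K)
    (m : ℕ) : ∃ θ : I → I, Injective θ ∧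
      ∀ i, Nontrivial (C (θ i)) ∧ θ i ∉ b '' Iio m ∧ Nonempty (C i ↪o C (θ i)) := by
  classical
  let R : Set I := {i | ¬Nontrivial (C i)} ∪ range b
  obtain ⟨r, hr⟩ := Countable.exists_injective_nat R
  have hshift (i : R) : Nontrivial (C (b (m + r i))) ∧ b (m + r i) ∉ b '' Iio m ∧
      Nonempty (C i ↪o C (b (m + r i))) := by
    refine ⟨(e _).toEquiv.nontrivial, fun ⟨n, hn, h⟩ => ?_, ?_⟩
    · have := hb h
      simp only [mem_Iio] at hn
      omega
    · rcases i.2 with htriv | ⟨n, hn⟩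
      · have := not_nontrivial_iff_subsingleton.1 htriv
        exact ⟨OrderEmbedding.ofSubsingleton ((e _).symm (Classical.arbitrary K))⟩
      · rw [← hn]
        exact ⟨((e n).trans (e _).symm).toOrderEmbedding⟩
  refine ⟨fun i => if h : i ∈ R then b (m + r ⟨i, h⟩) else i,
    Injective.dite (· ∈ R) (hb.comp ((add_right_injective m).comp hr)) Subtype.val_injective
      fun {_ _} _ hx' h => hx' (Or.inr ⟨_, h⟩), fun i => ?_⟩
  beta_reduce
  by_cases h : i ∈ R
  · rw [dif_pos h]
    exact hshift ⟨i, h⟩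
  · rw [dif_neg h]
    exact ⟨not_not.1 fun hi => h (Or.inl hi), fun ⟨n, _, hn⟩ => h (Or.inr ⟨n, hn⟩),
      ⟨(OrderIso.refl _).toOrderEmbedding⟩⟩

theorem equimorphic_collapse [Countable I] (hb : Injective b) (e : ∀ n, C (b n) ≃o K)
    (pt : ∀ n, C (b n)) (m : ℕ) : Equimorphic (collapse b pt m) (Σ i, C i) := by
  obtain ⟨θ, hθ, hθC⟩ := exists_injective_reindex hb e m
  let g := OrderEmbedding.sigmaMap hθ fun i => (hθC i).2.2.some
  exact ⟨⟨OrderEmbedding.subtype _⟩, ⟨OrderEmbedding.ofMapLEIff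
    (fun x => ⟨g x, Or.inl ⟨(hθC x.1).1, (hθC x.1).2.1⟩⟩) fun _ _ => g.le_iff_le⟩⟩

theorem aleph0_le_sibNumber_sigma [Countable I] (hb : Injective b) (e : ∀ n, C (b n) ≃o K) :
    ℵ₀ ≤ sibNumber (Σ i, C i) := by
  let pt n : C (b n) := (e n).symm (Classical.arbitrary K)
  let sibling (m : ℕ) : Quotient (sibSetoid (Σ i, C i)) :=
    ⟦⟨collapse b pt m, equimorphic_collapse hb e pt m⟩⟧
  have hsibling : Injective sibling := fun m m' h => by
    obtain ⟨φ⟩ := Quotient.exact h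
    simpa only [natCard_isIsolated_collapse hb] using φ.natCard_isIsolated_eq
  have := Infinite.of_injective sibling hsibling
  exact aleph0_le_mk _

end Collapse

theorem exists_two_le_infinite_natCard_eq {I : Type*} {C : I → Type*} [∀ i, Finite (C i)]
    {M : ℕ} (hM : ∀ i, Nat.card (C i) < M) (hnt : {i | Nontrivial (C i)}.Infinite) :
    ∃ k, 2 ≤ k ∧ {i | Nat.card (C i) = k}.Infinite := by
  by_contra! h
  refine hnt (((Finset.Ico 2 M).finite_toSet.biUnion fun k hk =>
    h k (Finset.mem_Ico.1 hk).1).subset fun i (hi : Nontrivial (C i)) => ?_)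
  exact mem_biUnion (x := Nat.card (C i))
    (Finset.mem_Ico.2 ⟨Finite.one_lt_card_iff_nontrivial.2 hi, hM i⟩) rfl

theorem sib_aleph0_of_bounded_general (I : Type) (C : I → Type)
    [∀ i, LinearOrder (C i)] [Countable I]
    (hnt : {i | Nontrivial (C i)}.Infinite)
    (hbd : ∃ M : ℕ, ∀ i, #(C i) < M) :
    sibNumber (Σ i, C i) = ℵ₀ := by
  obtain ⟨M, hM⟩ := hbd
  have (i : I) : Finite (C i) := lt_aleph0_iff_finite.1 ((hM i).trans natCast_lt_aleph0)
  have hcard (i : I) : Nat.card (C i) < M := by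
    simpa only [← Nat.cast_card, Nat.cast_lt] using hM i
  obtain ⟨k, hk, hinf⟩ := exists_two_le_infinite_natCard_eq hcard hnt
  have : Nontrivial (Fin k) := Fin.nontrivial_iff_two_le.2 hk
  let b := hinf.natEmbedding
  refine le_antisymm (sibNumber_sigma_le_aleph0 hcard) <|
    aleph0_le_sibNumber_sigma (b := fun n => (b n).1) (K := Fin k)
      (Subtype.val_injective.comp b.injective) fun n => ?_
  exact (Finite.nonempty_orderIso_of_natCard_eq ((b n).2.trans (Nat.card_fin k).symm)).some

theorem sib_aleph0_of_bounded (I : Type) (C : I → Type)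
    [∀ i, LinearOrder (C i)] [∀ i, Nonempty (C i)] [Countable I]
    (hnt : {i | Nontrivial (C i)}.Infinite)
    (hbd : ∃ M : ℕ, ∀ i, #(C i) < M) :
    sibNumber (Σ i, C i) = ℵ₀ :=
  sib_aleph0_of_bounded_general I C hnt hbd
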